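/- Let G be an irreducible finite Coxeter group with degrees d_1 ≤ ... ≤ d_{n-1} < d_n and (g,ζ,q) an admissible triplet. For any set of basic invariants x^1,...,x^n, the value x^n(q) of the top-degree invariant at q is nonzero. -/

import Mathlib

open MvPolynomial Matrix

/-- Iterated partial derivative `∂^b` for a multi-index `b`. -/
noncomputable def pd {n : ℕ} (b : Fin n → ℕ) :
    Module.End ℂ (MvPolynomial (Fin n) ℂ) :=
  (List.ofFn fun α : Fin n =>
    (((pderiv α : Derivation ℂ (MvPolynomial (Fin n) ℂ) _).toLinearMap :
      Module.End ℂ (MvPolynomial (Fin n) ℂ)) ^ (b α))).prod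

/-- The algebra endomorphism `F ↦ F ∘ M` given by substitution of a matrix. -/
noncomputable def subst {n : ℕ} (M : Matrix (Fin n) (Fin n) ℂ) :
    MvPolynomial (Fin n) ℂ →ₐ[ℂ] MvPolynomial (Fin n) ℂ :=
  aeval fun i => ∑ j, M i j • X j

/-- The action of `g ∈ GL(V)` on polynomials: `(g • F)(v) = F (g⁻¹ v)`. -/
noncomputable def polyAct {n : ℕ} (g : GL (Fin n) ℂ) (f : MvPolynomial (Fin n) ℂ) :
    MvPolynomial (Fin n) ℂ := subst (g⁻¹).val f

/-- A reflection: diagonalizable with all but one eigenvalue equal to 1. -/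
def IsReflection {n : ℕ} (g : GL (Fin n) ℂ) : Prop :=
  ∃ (P : GL (Fin n) ℂ) (i₀ : Fin n),
    ((P⁻¹).val * g.val * P.val).IsDiag ∧
    ∀ i, i ≠ i₀ → ((P⁻¹).val * g.val * P.val) i i = 1

/-- A finite complex reflection group. -/
def IsReflGroup {n : ℕ} (G : Subgroup (GL (Fin n) ℂ)) : Prop :=
  Finite G ∧ G = Subgroup.closure {g | g ∈ G ∧ IsReflection g}

/-- `f` is a `G`-invariant polynomial. -/
def Invariant {n : ℕ} (G : Subgroup (GL (Fin n) ℂ)) (f : MvPolynomial (Fin n) ℂ) : Prop :=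
  ∀ g ∈ G, polyAct g f = f

/-- `x` is a set of basic invariants of `G` with degrees `d`. -/
structure IsBasicInvts {n : ℕ} (G : Subgroup (GL (Fin n) ℂ))
    (x : Fin n → MvPolynomial (Fin n) ℂ) (d : Fin n → ℕ) : Prop where
  invariant : ∀ α, Invariant G (x α)
  homog : ∀ α, (x α).IsHomogeneous (d α)
  indep : AlgebraicIndependent ℂ x
  gen : ∀ f, Invariant G f → f ∈ Algebra.adjoin ℂ (Set.range x)
  mono : Monotone d
  pos : ∀ α, 0 < d α

/-- Admissibility of the triplet `(g, ζ, q)`. -/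
structure Admissible {n : ℕ} (G : Subgroup (GL (Fin (n+1)) ℂ))
    (x : Fin (n+1) → MvPolynomial (Fin (n+1)) ℂ) (d : Fin (n+1) → ℕ)
    (g : GL (Fin (n+1)) ℂ) (ζ : ℂ) (q : Fin (n+1) → ℂ) : Prop where
  mem : g ∈ G
  nonzero : q ≠ 0
  eig : Matrix.mulVec g.val q = ζ • q
  prim : IsPrimitiveRoot ζ (d (Fin.last n))
  jac : IsUnit (Matrix.det (Matrix.of fun α β => eval q (pderiv β (x α))))
  eigvals : ∃ P : GL (Fin (n+1)) ℂ,
    (P⁻¹).val * g.val * P.val =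
      Matrix.diagonal fun α => ζ ^ ((1 : ℤ) - (d α : ℤ))

/-- `φ[g,ζ,q]` read through the identification of `ℂ[V]^G` with a polynomial
ring in the basic invariants: `X^a ↦ φ(x^a)`. -/
noncomputable def phiAux {n : ℕ} (x : Fin n → MvPolynomial (Fin n) ℂ) (q : Fin n → ℂ) :
    MvPolynomial (Fin n) ℂ →ₐ[ℂ] MvPolynomial (Fin n) ℂ :=
  ((aeval fun i => X i + C (q i)).comp (aeval x)).comp
    (aeval fun α => X α - C (eval q (x α)))

/-- `ψ[g,ζ,q]` read through the identification of `ℂ[V]^G` with a polynomial ring: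
on each weighted-degree-`j` part it takes the weight-`j` part of `φ`. -/
noncomputable def psiAux {n : ℕ} (x : Fin n → MvPolynomial (Fin n) ℂ) (d : Fin n → ℕ)
    (q : Fin n → ℂ) (P : MvPolynomial (Fin n) ℂ) : MvPolynomial (Fin n) ℂ :=
  ∑ j ∈ Finset.range (P.totalDegree * (∑ α, d α) + 1),
    weightedHomogeneousComponent d j (phiAux x q (weightedHomogeneousComponent d j P))

/-- A finite Coxeter group: finite, defined over ℝ (real matrix entries), and generated
by its order-2 reflections. -/
def IsCoxLike {n : ℕ} (G : Subgroup (GL (Fin n) ℂ)) : Prop :=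
  Finite G ∧ (∀ g ∈ G, ∀ i j, ∃ r : ℝ, (g : GL (Fin n) ℂ).val i j = (r : ℂ)) ∧
  G = Subgroup.closure {g | g ∈ G ∧ IsReflection g ∧ g * g = 1}

/-- The action of `G` on `V` is irreducible. -/
def IsIrredOn {n : ℕ} (G : Subgroup (GL (Fin n) ℂ)) : Prop :=
  ∀ W : Submodule ℂ (Fin n → ℂ),
    (∀ g ∈ G, ∀ w ∈ W, Matrix.mulVec (g : GL (Fin n) ℂ).val w ∈ W) → W = ⊥ ∨ W = ⊤

/-! Since `g q = ζ q`, a homogeneous invariant `f` of degree `m` satisfies `f(q) = ζ ^ m f(q)`.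
As `ζ` is a primitive `d_n`-th root of unity and `d_α < d_n` for `α ≠ n`, every `x^α` with `α ≠ n`
vanishes at `q`. If `x^n(q) = 0` as well, then every invariant, being a polynomial in the `x^α`,
takes the same value at `q` as at `0`. This forces `q = 0`: the coefficients of
`∏_{h ∈ G} (T - h • X_i)` are invariant, so at `q` this polynomial becomes `T ^ |G|`, which has
`q_i` as a root. -/

namespace MvPolynomial.IsHomogeneous

variable {σ R : Type*} [CommSemiring R] {φ : MvPolynomial σ R} {m : ℕ}

theorem eval_smul (hφ : φ.IsHomogeneous m) (c : R) (v : σ → R) :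
    eval (c • v) φ = c ^ m * eval v φ := by
  rw [eval_eq, eval_eq, Finset.mul_sum]
  refine Finset.sum_congr rfl fun e he => ?_
  have hdeg : ∑ i ∈ e.support, e i = m := by
    simpa [Finsupp.weight_apply, Finsupp.sum] using hφ (mem_support_iff.mp he)
  simp only [Pi.smul_apply, smul_eq_mul, mul_pow, Finset.prod_mul_distrib,
    Finset.prod_pow_eq_pow_sum, hdeg]
  ring

theorem eval_zero_of_ne_zero (hφ : φ.IsHomogeneous m) (hm : m ≠ 0) : eval 0 φ = 0 := by
  rw [MvPolynomial.eval_zero, constantCoeff_eq]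
  exact hφ.coeff_eq_zero (by simpa using hm.symm)

end MvPolynomial.IsHomogeneous

section Action

variable {n : ℕ}

theorem eval_subst (M : Matrix (Fin n) (Fin n) ℂ) (v : Fin n → ℂ) (f : MvPolynomial (Fin n) ℂ) :
    eval v (subst M f) = eval (M *ᵥ v) f := by
  have h := DFunLike.congr_fun (comp_aeval (R := ℂ) (fun i => ∑ j, M i j • X j) (aeval v)) f
  simp only [AlgHom.comp_apply, map_sum, map_smul, aeval_X, smul_eq_mul] at h
  exact h

theorem subst_subst (M N : Matrix (Fin n) (Fin n) ℂ) (f : MvPolynomial (Fin n) ℂ) :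
    subst M (subst N f) = subst (N * M) f := by
  change ((subst M).comp (subst N)) f = _
  congr 1
  refine algHom_ext fun i => ?_
  simp only [subst, AlgHom.comp_apply, aeval_X, map_sum, map_smul, Matrix.mul_apply,
    Finset.sum_smul, smul_smul, Finset.smul_sum]
  exact Finset.sum_comm

theorem subst_one (f : MvPolynomial (Fin n) ℂ) : subst 1 f = f := by
  change _ = AlgHom.id ℂ _ f
  congr 1
  refine algHom_ext fun i => ?_
  simp [subst, Matrix.one_apply]

theorem polyAct_mul (g h : GL (Fin n) ℂ) (f : MvPolynomial (Fin n) ℂ) :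
    polyAct g (polyAct h f) = polyAct (g * h) f := by
  rw [polyAct, polyAct, polyAct, subst_subst, _root_.mul_inv_rev, Units.val_mul]

theorem polyAct_one (f : MvPolynomial (Fin n) ℂ) : polyAct 1 f = f := by
  rw [polyAct, inv_one, Units.val_one, subst_one]

theorem eval_polyAct (g : GL (Fin n) ℂ) (v : Fin n → ℂ) (f : MvPolynomial (Fin n) ℂ) :
    eval v (polyAct g f) = eval ((g⁻¹).val *ᵥ v) f :=
  eval_subst _ _ _

end Action

section Invariants

variable {n : ℕ}

theorem eval_mulVec_of_polyAct_eq {g : GL (Fin n) ℂ} {f : MvPolynomial (Fin n) ℂ}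
    (hf : polyAct g f = f) (v : Fin n → ℂ) : eval (g.val *ᵥ v) f = eval v f := by
  have h := eval_polyAct g (g.val *ᵥ v) f
  rwa [hf, mulVec_mulVec, ← Units.val_mul, inv_mul_cancel, Units.val_one, one_mulVec] at h

theorem eval_eq_zero_of_mulVec_eq_smul {g : GL (Fin n) ℂ} {f : MvPolynomial (Fin n) ℂ} {m : ℕ}
    (hf : polyAct g f = f) (hhom : f.IsHomogeneous m) {ζ : ℂ} {v : Fin n → ℂ}
    (hv : g.val *ᵥ v = ζ • v) (hζ : ζ ^ m ≠ 1) : eval v f = 0 := by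
  have h := eval_mulVec_of_polyAct_eq hf v
  rw [hv, hhom.eval_smul] at h
  have : (ζ ^ m - 1) * eval v f = 0 := by rw [sub_mul, h, one_mul, sub_self]
  exact (mul_eq_zero.mp this).resolve_left (sub_ne_zero.mpr hζ)

variable (G : Subgroup (GL (Fin n) ℂ)) [Fintype G]

noncomputable def orbitPoly (i : Fin n) : Polynomial (MvPolynomial (Fin n) ℂ) :=
  ∏ h : G, (Polynomial.X - Polynomial.C (polyAct (h : GL (Fin n) ℂ) (X i)))

theorem invariant_coeff_orbitPoly (i : Fin n) (j : ℕ) : Invariant G ((orbitPoly G i).coeff j) := by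
  intro h hh
  have hmap : (orbitPoly G i).map (subst (h⁻¹).val).toRingHom = orbitPoly G i := by
    simp only [orbitPoly, Polynomial.map_prod, Polynomial.map_sub, Polynomial.map_X,
      Polynomial.map_C]
    refine Fintype.prod_equiv (Equiv.mulLeft (⟨h, hh⟩ : G)) _ _ fun k => ?_
    change _ = Polynomial.X - Polynomial.C (polyAct (h * (k : GL (Fin n) ℂ)) (X i))
    rw [← polyAct_mul]
    rfl
  change (subst (h⁻¹).val).toRingHom _ = _
  rw [← Polynomial.coeff_map, hmap]

theorem orbitPoly_map_eval_zero (i : Fin n) :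
    (orbitPoly G i).map (eval 0) = Polynomial.X ^ Fintype.card G := by
  simp only [orbitPoly, Polynomial.map_prod, Polynomial.map_sub, Polynomial.map_X,
    Polynomial.map_C, eval_polyAct, mulVec_zero, eval_X, Pi.zero_apply, map_zero, sub_zero,
    Finset.prod_const, Finset.card_univ]

theorem orbitPoly_eval_X (i : Fin n) : (orbitPoly G i).eval (X i) = 0 := by
  rw [orbitPoly, Polynomial.eval_prod]
  refine Finset.prod_eq_zero (Finset.mem_univ 1) ?_
  simp [polyAct_one]

theorem eq_zero_of_forall_invariant_eval_eq {q : Fin n → ℂ}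
    (hq : ∀ f, Invariant G f → eval q f = eval 0 f) : q = 0 := by
  funext i
  have hmap : (orbitPoly G i).map (eval q) = Polynomial.X ^ Fintype.card G := by
    rw [← orbitPoly_map_eval_zero G i]
    ext j
    simp only [Polynomial.coeff_map, hq _ (invariant_coeff_orbitPoly G i j)]
  have hroot : q i ^ Fintype.card G = 0 := by
    have h := congrArg (eval q) (orbitPoly_eval_X G i)
    rwa [map_zero, ← Polynomial.eval₂_at_apply, ← Polynomial.eval_map, hmap, eval_X,
      Polynomial.eval_pow, Polynomial.eval_X] at h
  exact pow_eq_zero_iff Fintype.card_ne_zero |>.mp hroot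

end Invariants

theorem eval_eq_of_mem_adjoin_range {σ ι R : Type*} [CommSemiring R] {s : ι → MvPolynomial σ R}
    {v w : σ → R} (hs : ∀ i, eval v (s i) = eval w (s i)) {f : MvPolynomial σ R}
    (hf : f ∈ Algebra.adjoin R (Set.range s)) : eval v f = eval w f :=
  (AlgHom.eqOn_adjoin_iff (φ := aeval v) (ψ := aeval w)).mpr
    (Set.forall_mem_range.mpr hs) hf

theorem good_basic_invariants_stmt16_general {n : ℕ} (G : Subgroup (GL (Fin (n+1)) ℂ))
    (hG : IsReflGroup G)
    (x : Fin (n+1) → MvPolynomial (Fin (n+1)) ℂ) (d : Fin (n+1) → ℕ)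
    (hx : IsBasicInvts G x d)
    (hlt : ∀ α, α ≠ Fin.last n → d α < d (Fin.last n))
    (g : GL (Fin (n+1)) ℂ) (ζ : ℂ) (q : Fin (n+1) → ℂ)
    (adm : Admissible G x d g ζ q) :
    eval q (x (Fin.last n)) ≠ 0 := by
  intro hlast
  have hvanish : ∀ α, eval q (x α) = 0 := by
    intro α
    by_cases hα : α = Fin.last n
    · rwa [hα]
    · exact eval_eq_zero_of_mulVec_eq_smul (hx.invariant α g adm.mem) (hx.homog α) adm.eig
        (adm.prim.pow_ne_one_of_pos_of_lt (hx.pos α).ne' (hlt α hα))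
  have hsame : ∀ α, eval q (x α) = eval 0 (x α) := fun α => by
    rw [hvanish, (hx.homog α).eval_zero_of_ne_zero (hx.pos α).ne']
  have := hG.1
  have := Fintype.ofFinite G
  exact adm.nonzero <| eq_zero_of_forall_invariant_eval_eq G fun f hf =>
    eval_eq_of_mem_adjoin_range hsame (hx.gen f hf)

/-- For an irreducible finite Coxeter group `G` with degrees `d_1 ≤ … ≤ d_{n-1} < d_n`
and an admissible triplet `(g, ζ, q)`, the value `x^n(q)` of the top-degree basic
invariant at `q` is nonzero. -/
theorem good_basic_invariants_stmt16 {n : ℕ} (G : Subgroup (GL (Fin (n+1)) ℂ))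
    (hG : IsReflGroup G) (hcox : IsCoxLike G) (hirr : IsIrredOn G)
    (x : Fin (n+1) → MvPolynomial (Fin (n+1)) ℂ) (d : Fin (n+1) → ℕ)
    (hx : IsBasicInvts G x d)
    (hlt : ∀ α, α ≠ Fin.last n → d α < d (Fin.last n))
    (g : GL (Fin (n+1)) ℂ) (ζ : ℂ) (q : Fin (n+1) → ℂ)
    (adm : Admissible G x d g ζ q) :
    eval q (x (Fin.last n)) ≠ 0 :=
  good_basic_invariants_stmt16_general G hG x d hx hlt g ζ q adm
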